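/- If C is a binary orthogonal array OA(N,n,2,t) attaining the Friedman bound with equality, i.e. N = 2^n (1 - n/(2(t+1))), then C is simple, C is an independent set in Q_n (no two elements of C differ in exactly one coordinate), and the pair (C, complement of C) is an equitable partition of Q_n with quotient matrix [[0, n],[2(t+1)-n, 2n-2(t+1)]]. -/

import Mathlib

/-!
Write `F(S) = ∑ₓ f x (-1)^{∑_{i∈S} xᵢ}` for the Walsh coefficients of the multiplicity function
`f` of the array, `A` for the adjacency operator of `Q_n`, `N = F(∅)` and `λ = 2(t+1) - n`.
Strength `t` kills `F(S)` for `1 ≤ |S| ≤ t`. By Parseval and the edge identity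
`∑_S (n - 2|S|) F(S)² = 2ⁿ ⟨f, A f⟩ ≥ 0`, the sum `∑_S 2(t+1-|S|) F(S)²` is at least
`λ 2ⁿ ∑ f² ≥ λ 2ⁿ N = 2(t+1) N²`, which is its `S = ∅` term, while all its other terms are `≤ 0`.
Hence `F` lives on the levels `0` and `t+1`, which says `A f = λ (1 - f)`. Since `A f ≥ 0`, this
forces `f ≤ 1` and gives the neighbour counts.
-/

namespace Hypercube

open Finset

variable {n : ℕ}

lemma add_self_eq_zero (x : Fin n → Fin 2) : x + x = 0 :=
  funext fun i => by
    have key : ∀ a : Fin 2, a + a = 0 := by decide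
    exact key (x i)

lemma neg_one_pow_val_add (a b : Fin 2) :
    (-1 : ℝ) ^ ((a + b : Fin 2) : ℕ) = (-1) ^ (a : ℕ) * (-1) ^ (b : ℕ) := by
  fin_cases a <;> fin_cases b <;> norm_num [show (1 + 1 : Fin 2) = 0 from rfl]

def walsh (S : Finset (Fin n)) (x : Fin n → Fin 2) : ℝ := ∏ i ∈ S, (-1) ^ (x i : ℕ)

lemma walsh_add (S : Finset (Fin n)) (x y : Fin n → Fin 2) :
    walsh S (x + y) = walsh S x * walsh S y := by
  simp only [walsh, Pi.add_apply, neg_one_pow_val_add, prod_mul_distrib]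

lemma walsh_single (S : Finset (Fin n)) (i : Fin n) :
    walsh S (Pi.single i 1) = if i ∈ S then -1 else 1 := by
  have h : ∀ j, (-1 : ℝ) ^ ((Pi.single i 1 : Fin n → Fin 2) j : ℕ) = if i = j then -1 else 1 := by
    intro j
    rcases eq_or_ne i j with rfl | hij
    · simp
    · simp [Ne.symm hij, hij]
  simp only [walsh, h, prod_ite_eq]

lemma sum_walsh_single (S : Finset (Fin n)) :
    ∑ i, walsh S (Pi.single i 1) = n - 2 * S.card := by
  have h : ∀ i, walsh S (Pi.single i 1) = 1 - 2 * if i ∈ S then 1 else 0 := by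
    intro i; rw [walsh_single]; split_ifs <;> ring
  simp only [h, sum_sub_distrib, ← mul_sum, sum_boole, filter_mem_eq_inter, univ_inter]
  simp

lemma sum_walsh_of_nonempty {S : Finset (Fin n)} (hS : S.Nonempty) : ∑ x, walsh S x = 0 := by
  obtain ⟨i, hi⟩ := hS
  have h := Equiv.sum_comp (Equiv.addRight (Pi.single i 1 : Fin n → Fin 2)) (walsh S)
  simp only [Equiv.coe_addRight, walsh_add, walsh_single, if_pos hi, mul_neg_one,
    sum_neg_distrib] at h
  linarith

lemma sum_walsh_eq_ite (z : Fin n → Fin 2) :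
    ∑ S, walsh S z = if z = 0 then 2 ^ n else 0 := by
  simp only [walsh]
  rw [← powerset_univ, ← prod_one_add]
  split_ifs with hz
  · norm_num [hz]
  · obtain ⟨i, hi⟩ := Function.ne_iff.mp hz
    refine prod_eq_zero (mem_univ i) ?_
    have key : ∀ a : Fin 2, a ≠ 0 → a = 1 := by decide
    simp [key _ hi]

def walshCoeff (f : (Fin n → Fin 2) → ℝ) (S : Finset (Fin n)) : ℝ := ∑ x, f x * walsh S x

lemma walshCoeff_empty (f : (Fin n → Fin 2) → ℝ) : walshCoeff f ∅ = ∑ x, f x := by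
  simp [walshCoeff, walsh]

lemma walshCoeff_comp_add_right (f : (Fin n → Fin 2) → ℝ) (z : Fin n → Fin 2)
    (S : Finset (Fin n)) :
    walshCoeff (fun x => f (x + z)) S = walsh S z * walshCoeff f S := by
  have h := Equiv.sum_comp (Equiv.addRight z) (fun x => f x * walsh S (x + z))
  simp only [Equiv.coe_addRight, add_assoc, add_self_eq_zero, add_zero] at h
  simp only [walshCoeff, mul_sum, h, walsh_add]
  exact sum_congr rfl fun x _ => by ring

theorem sum_walshCoeff_mul_walsh (f : (Fin n → Fin 2) → ℝ) (v : Fin n → Fin 2) :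
    ∑ S, walshCoeff f S * walsh S v = 2 ^ n * f v := by
  have hzero : ∀ x : Fin n → Fin 2, x + v = 0 ↔ x = v := fun x => by
    rw [add_eq_zero_iff_eq_neg, neg_eq_of_add_eq_zero_left (add_self_eq_zero v)]
  simp only [walshCoeff, sum_mul, mul_assoc, ← walsh_add]
  rw [sum_comm]
  simp only [← mul_sum, sum_walsh_eq_ite, hzero, mul_ite, mul_zero, sum_ite_eq', mem_univ,
    if_true]
  ring

theorem sum_walshCoeff_mul_walshCoeff (f g : (Fin n → Fin 2) → ℝ) :
    ∑ S, walshCoeff f S * walshCoeff g S = 2 ^ n * ∑ x, f x * g x := by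
  calc ∑ S, walshCoeff f S * walshCoeff g S
      = ∑ x, g x * ∑ S, walshCoeff f S * walsh S x := by
        simp only [walshCoeff, mul_sum, sum_mul]
        rw [sum_comm]
        exact sum_congr rfl fun x _ => sum_congr rfl fun S _ => sum_congr rfl fun y _ => by ring
    _ = 2 ^ n * ∑ x, f x * g x := by
        simp only [sum_walshCoeff_mul_walsh, mul_sum]
        exact sum_congr rfl fun x _ => by ring

theorem sum_walsh_mul_walshCoeff_sq (f : (Fin n → Fin 2) → ℝ) (z : Fin n → Fin 2) :
    ∑ S, walsh S z * walshCoeff f S ^ 2 = 2 ^ n * ∑ x, f x * f (x + z) := by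
  rw [← sum_walshCoeff_mul_walshCoeff]
  simp only [walshCoeff_comp_add_right]
  exact sum_congr rfl fun S _ => by ring

theorem sum_walshCoeff_sq (f : (Fin n → Fin 2) → ℝ) :
    ∑ S, walshCoeff f S ^ 2 = 2 ^ n * ∑ x, f x ^ 2 := by
  simpa [walsh, sq] using sum_walsh_mul_walshCoeff_sq f 0

theorem sum_card_mul_walshCoeff_sq (f : (Fin n → Fin 2) → ℝ) :
    ∑ S : Finset (Fin n), (n - 2 * S.card) * walshCoeff f S ^ 2
      = 2 ^ n * ∑ x, f x * ∑ i, f (x + Pi.single i 1) := by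
  simp only [← sum_walsh_single, sum_mul, mul_sum]
  rw [sum_comm]
  simp only [sum_walsh_mul_walshCoeff_sq, mul_sum]
  rw [sum_comm]

theorem sum_single_eq_sum_card_mul_walshCoeff (f : (Fin n → Fin 2) → ℝ) (v : Fin n → Fin 2) :
    2 ^ n * ∑ i, f (v + Pi.single i 1)
      = ∑ S : Finset (Fin n), (n - 2 * S.card) * walshCoeff f S * walsh S v := by
  simp only [mul_sum, ← sum_walshCoeff_mul_walsh, walsh_add, ← sum_walsh_single, sum_mul]
  rw [sum_comm]
  exact sum_congr rfl fun S _ => sum_congr rfl fun i _ => by ring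

theorem walshCoeff_eq_zero_of_balanced (f : (Fin n → Fin 2) → ℝ) {s S : Finset (Fin n)}
    (hS : S.Nonempty) (hSs : S ⊆ s) (M : ℝ)
    (hbal : ∀ g : Fin n → Fin 2, ∑ x ∈ univ.filter (fun x => ∀ i ∈ s, x i = g i), f x = M) :
    walshCoeff f S = 0 := by
  -- Double count `∑_g ∑_{x|ₛ = g|ₛ} f x χ_S x`: summing over `g` first gives `M ∑_g χ_S g = 0`,
  -- summing over `x` first gives `F(S)` times the number `c` of words vanishing on `s`.
  set c := #(univ.filter fun h : Fin n → Fin 2 => ∀ i ∈ s, h i = 0)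
  have hc : c ≠ 0 := card_ne_zero.2 ⟨0, by simp⟩
  have hdouble : ∑ g : Fin n → Fin 2, ∑ x ∈ univ.filter (fun x => ∀ i ∈ s, x i = g i),
      f x * walsh S x = walshCoeff f S * c := by
    simp only [sum_filter]
    rw [sum_comm]
    simp only [walshCoeff, sum_mul]
    refine sum_congr rfl fun x _ => ?_
    rw [← Equiv.sum_comp (Equiv.addLeft x)]
    simp [c, sum_ite, mul_comm]
  have hcollapse : ∑ g : Fin n → Fin 2, ∑ x ∈ univ.filter (fun x => ∀ i ∈ s, x i = g i),
      f x * walsh S x = M * ∑ g, walsh S g := by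
    rw [mul_sum]
    refine sum_congr rfl fun g _ => ?_
    have hwalsh : ∀ x ∈ univ.filter (fun x => ∀ i ∈ s, x i = g i), walsh S x = walsh S g :=
      fun x hx => prod_congr rfl fun i hi => by rw [(mem_filter.1 hx).2 i (hSs hi)]
    rw [sum_congr rfl fun x hx => by rw [hwalsh x hx], ← sum_mul, hbal]
  rw [sum_walsh_of_nonempty hS, mul_zero, hdouble] at hcollapse
  exact (mul_eq_zero.1 hcollapse).resolve_right (Nat.cast_ne_zero.2 hc)

/-- `f x` is the multiplicity of the word `x`; the index `N / 2 ^ t` is multiplied out. -/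
def IsOrthogonalArray (t N : ℕ) (f : (Fin n → Fin 2) → ℕ) : Prop :=
  ∀ s : Finset (Fin n), s.card = t → ∀ g : Fin n → Fin 2,
    (∑ x ∈ univ.filter (fun x : Fin n → Fin 2 => ∀ i ∈ s, x i = g i), f x) * 2 ^ t = N

theorem IsOrthogonalArray.walshCoeff_eq_zero {t N : ℕ} {f : (Fin n → Fin 2) → ℕ}
    (hf : IsOrthogonalArray t N f) (htn : t ≤ n) {S : Finset (Fin n)} (hS : S.Nonempty)
    (hSt : S.card ≤ t) : walshCoeff (fun x => (f x : ℝ)) S = 0 := by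
  obtain ⟨s, hSs, -, hs⟩ :=
    exists_subsuperset_card_eq (subset_univ S) hSt (by simpa using htn)
  refine walshCoeff_eq_zero_of_balanced _ hS hSs (N / 2 ^ t) fun g => ?_
  rw [eq_div_iff (by positivity)]
  exact_mod_cast hf s hs g

theorem sum_single_eq_of_walshCoeff_eq_zero (f : (Fin n → Fin 2) → ℝ) (k : ℕ)
    (hF : ∀ S : Finset (Fin n), S.Nonempty → S.card ≠ k → walshCoeff f S = 0)
    (v : Fin n → Fin 2) :
    2 ^ n * ∑ i, f (v + Pi.single i 1) = (n - 2 * k) * (2 ^ n * f v) + 2 * k * ∑ x, f x := by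
  have hlevel : ∀ S : Finset (Fin n), S ≠ ∅ →
      2 * (k - S.card : ℝ) * walshCoeff f S * walsh S v = 0 := fun S hS => by
    by_cases hSk : S.card = k
    · simp [hSk]
    · simp [hF S (nonempty_iff_ne_empty.2 hS) hSk]
  calc 2 ^ n * ∑ i, f (v + Pi.single i 1)
      = ∑ S : Finset (Fin n), ((n - 2 * k) * (walshCoeff f S * walsh S v)
          + 2 * (k - S.card : ℝ) * walshCoeff f S * walsh S v) := by
        rw [sum_single_eq_sum_card_mul_walshCoeff]
        exact sum_congr rfl fun S _ => by ring
    _ = (n - 2 * k) * (2 ^ n * f v) + 2 * k * ∑ x, f x := by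
        rw [sum_add_distrib, ← mul_sum, sum_walshCoeff_mul_walsh,
          sum_eq_single ∅ (fun S _ hS => hlevel S hS) (by simp)]
        simp [walshCoeff_empty, walsh]

section Friedman

variable {t : ℕ} (f : (Fin n → Fin 2) → ℝ) (hf_nonneg : ∀ x, 0 ≤ f x)
  (hf_le_sq : ∀ x, f x ≤ f x ^ 2)
  (hF : ∀ S : Finset (Fin n), S.Nonempty → S.card ≤ t → walshCoeff f S = 0)
  (hN : 2 * (t + 1) * ∑ x, f x = 2 ^ n * (2 * (t + 1) - n))
include hf_nonneg hf_le_sq hF hN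

theorem walshCoeff_eq_zero_of_friedman {S : Finset (Fin n)} (hS : S.Nonempty)
    (hSt : S.card ≠ t + 1) : walshCoeff f S = 0 := by
  set N := ∑ x, f x
  set lam : ℝ := 2 * (t + 1) - n
  have hN_nonneg : 0 ≤ N := sum_nonneg fun x _ => hf_nonneg x
  have hlam : 0 ≤ lam := by
    have : 0 ≤ 2 ^ n * lam := hN ▸ mul_nonneg (by positivity) hN_nonneg
    exact (mul_nonneg_iff_of_pos_left (by positivity)).1 this
  -- `term ∅ = 2(t+1)N²` bounds the total from below, and the other terms are `≤ 0` by strength.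
  set term : Finset (Fin n) → ℝ := fun S => 2 * ((t + 1) - S.card) * walshCoeff f S ^ 2
  have hsplit : term ∅ + ∑ S ∈ univ.erase ∅, term S
      = 2 ^ n * ∑ x, f x * ∑ i, f (x + Pi.single i 1) + lam * (2 ^ n * ∑ x, f x ^ 2) := by
    rw [add_sum_erase _ _ (mem_univ _), ← sum_card_mul_walshCoeff_sq, ← sum_walshCoeff_sq,
      mul_sum, ← sum_add_distrib]
    exact sum_congr rfl fun S _ => by ring
  have hedge : 0 ≤ ∑ x, f x * ∑ i, f (x + Pi.single i 1) :=
    sum_nonneg fun x _ => mul_nonneg (hf_nonneg x) (sum_nonneg fun i _ => hf_nonneg _)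
  have hsq : N ≤ ∑ x, f x ^ 2 := sum_le_sum fun x _ => hf_le_sq x
  have hrest_nonneg : 0 ≤ ∑ S ∈ univ.erase ∅, term S := by
    have hterm_empty : term ∅ = 2 * (t + 1) * N ^ 2 := by simp [term, walshCoeff_empty, N]
    have hP : (0 : ℝ) ≤ 2 ^ n := by positivity
    nlinarith [mul_le_mul_of_nonneg_left hsq (mul_nonneg hlam hP)]
  have hrest_nonpos : ∀ S ∈ univ.erase ∅, term S ≤ 0 := fun S hS => by
    by_cases hSt : S.card ≤ t
    · simp [term, hF S (nonempty_iff_ne_empty.2 (ne_of_mem_erase hS)) hSt]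
    · have : (t : ℝ) + 1 ≤ S.card := by exact_mod_cast not_le.1 hSt
      exact mul_nonpos_of_nonpos_of_nonneg (by linarith) (sq_nonneg _)
  have hterm := (sum_eq_zero_iff_of_nonpos hrest_nonpos).1
    (le_antisymm (sum_nonpos hrest_nonpos) hrest_nonneg) S (mem_erase.2 ⟨hS.ne_empty, mem_univ S⟩)
  have hcoeff : (2 * ((t + 1) - S.card) : ℝ) ≠ 0 := by
    have : (S.card : ℝ) ≠ t + 1 := by exact_mod_cast hSt
    intro h; apply this; linarith
  simpa [term, hcoeff] using hterm

theorem sum_single_eq_of_friedman (v : Fin n → Fin 2) :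
    ∑ i, f (v + Pi.single i 1) = (2 * (t + 1) - n) * (1 - f v) := by
  have h := sum_single_eq_of_walshCoeff_eq_zero f (t + 1)
    (fun S hS hSt => walshCoeff_eq_zero_of_friedman f hf_nonneg hf_le_sq hF hN hS hSt) v
  push_cast at h
  refine mul_left_cancel₀ (pow_ne_zero n two_ne_zero) ?_
  linear_combination h + hN

theorem le_one_of_friedman (x : Fin n → Fin 2) : f x ≤ 1 := by
  by_contra! hx
  have hA := sum_single_eq_of_friedman f hf_nonneg hf_le_sq hF hN x
  have hA_nonneg : 0 ≤ ∑ i, f (x + Pi.single i 1) := sum_nonneg fun i _ => hf_nonneg _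
  have hNx : f x ≤ ∑ y, f y := single_le_sum (fun y _ => hf_nonneg y) (mem_univ x)
  have hlam_nonpos : 2 * (t + 1) - (n : ℝ) ≤ 0 := by nlinarith
  have hlam_pos : 0 < 2 ^ n * (2 * (t + 1) - (n : ℝ)) :=
    hN ▸ mul_pos (by positivity) (by linarith)
  nlinarith [pow_pos (zero_lt_two' ℝ) n]

end Friedman

lemma hammingDist_eq_one_iff {v w : Fin n → Fin 2} :
    hammingDist v w = 1 ↔ ∃ i, w = v + Pi.single i 1 := by
  have key : ∀ a b : Fin 2, (a ≠ b ↔ b = a + 1) ∧ (a = b ↔ b = a + 0) := by decide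
  simp only [hammingDist, card_eq_one, Finset.ext_iff, mem_filter, mem_univ, true_and,
    mem_singleton, funext_iff, Pi.add_apply, Pi.single_apply]
  refine exists_congr fun i => forall_congr' fun j => ?_
  split_ifs with h
  · simp only [h, iff_true]; exact (key _ _).1
  · simp only [h, iff_false, not_not]; exact (key _ _).2

lemma card_filter_hammingDist_eq_one (p : (Fin n → Fin 2) → Prop) [DecidablePred p]
    (v : Fin n → Fin 2) :
    #{w | p w ∧ hammingDist v w = 1} = #{i | p (v + Pi.single i 1)} := by
  symm
  refine card_bij (fun i _ => v + Pi.single i 1) (fun i hi => ?_) (fun i _ j _ h => ?_) ?_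
  · simp only [mem_filter, mem_univ, true_and] at hi ⊢
    exact ⟨hi, hammingDist_eq_one_iff.2 ⟨i, rfl⟩⟩
  · by_contra hij
    simpa [hij] using congr_fun (add_left_cancel h) i
  · intro w hw
    simp only [mem_filter, mem_univ, true_and] at hw
    obtain ⟨i, rfl⟩ := hammingDist_eq_one_iff.1 hw.2
    exact ⟨i, by simpa using hw.1, rfl⟩

lemma card_filter_eq_one_eq_sum {ι : Type*} [Fintype ι] (g : ι → ℕ) (hg : ∀ i, g i ≤ 1) :
    #{i | g i = 1} = ∑ i, g i := by
  rw [card_filter]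
  exact sum_congr rfl fun i _ => by have := hg i; split_ifs <;> omega

lemma card_filter_eq_one_add_card_filter_eq_zero {ι : Type*} [Fintype ι] (g : ι → ℕ)
    (hg : ∀ i, g i ≤ 1) : #{i | g i = 1} + #{i | g i = 0} = Fintype.card ι := by
  rw [← card_univ, ← card_filter_add_card_filter_not (s := univ) (fun i => g i = 1)]
  congr 2 with i
  simp only [mem_filter, mem_univ, true_and]
  have := hg i
  omega

theorem card_neighbors_eq_of_sum_single_eq (f : (Fin n → Fin 2) → ℕ) (hf : ∀ x, f x ≤ 1)
    (k : ℤ) (hA : ∀ v, ∑ i, (f (v + Pi.single i 1) : ℤ) = k * (1 - f v)) (v : Fin n → Fin 2) :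
    (#{w | f w = 1 ∧ hammingDist v w = 1} : ℤ) = k * (1 - f v) ∧
      (#{w | f w = 0 ∧ hammingDist v w = 1} : ℤ) = n - k * (1 - f v) := by
  have hone : (#{w | f w = 1 ∧ hammingDist v w = 1} : ℤ) = k * (1 - f v) := by
    rw [card_filter_hammingDist_eq_one, card_filter_eq_one_eq_sum _ fun i => hf _, ← hA v]
    push_cast
    rfl
  have htotal :
      #{w | f w = 1 ∧ hammingDist v w = 1} + #{w | f w = 0 ∧ hammingDist v w = 1} = n := by
    rw [card_filter_hammingDist_eq_one, card_filter_hammingDist_eq_one,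
      card_filter_eq_one_add_card_filter_eq_zero _ fun i => hf _, Fintype.card_fin]
  exact ⟨hone, by rw [← hone]; omega⟩

end Hypercube

open Finset Hypercube in
theorem stmt_3 (n t N : ℕ) (f : (Fin n → Fin 2) → ℕ)
    (htn : t ≤ n)
    (htotal : ∑ x : Fin n → Fin 2, f x = N)
    (hOA : ∀ s : Finset (Fin n), s.card = t → ∀ g : Fin n → Fin 2,
      (∑ x ∈ Finset.univ.filter (fun x : Fin n → Fin 2 => ∀ i ∈ s, x i = g i), f x)
        * 2 ^ t = N)
    (heq : (N : ℝ) = 2 ^ n * (1 - n / (2 * (t + 1)))) :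
    (∀ x, f x ≤ 1) ∧
    (∀ x y : Fin n → Fin 2, f x = 1 → f y = 1 → hammingDist x y ≠ 1) ∧
    (∀ v : Fin n → Fin 2, f v = 1 →
      (Finset.univ.filter (fun w : Fin n → Fin 2 => f w = 1 ∧ hammingDist v w = 1)).card = 0 ∧
      (Finset.univ.filter (fun w : Fin n → Fin 2 => f w = 0 ∧ hammingDist v w = 1)).card = n) ∧
    (∀ v : Fin n → Fin 2, f v = 0 →
      ((Finset.univ.filter (fun w : Fin n → Fin 2 => f w = 1 ∧ hammingDist v w = 1)).card : ℤ)
        = 2 * (t + 1) - n ∧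
      ((Finset.univ.filter (fun w : Fin n → Fin 2 => f w = 0 ∧ hammingDist v w = 1)).card : ℤ)
        = 2 * n - 2 * (t + 1)) := by
  have hF0 : ∀ x, 0 ≤ (f x : ℝ) := fun x => Nat.cast_nonneg _
  have hFsq : ∀ x, (f x : ℝ) ≤ (f x : ℝ) ^ 2 := fun x => by
    exact_mod_cast Nat.le_self_pow two_ne_zero (f x)
  have hFt : ∀ S : Finset (Fin n), S.Nonempty → S.card ≤ t →
      walshCoeff (fun x => (f x : ℝ)) S = 0 :=
    fun S hS hSt => IsOrthogonalArray.walshCoeff_eq_zero hOA htn hS hSt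
  have hN : 2 * (t + 1) * ∑ x, (f x : ℝ) = 2 ^ n * (2 * (t + 1) - n) := by
    rw [← Nat.cast_sum, htotal, heq]
    field_simp
  have hsimple : ∀ x, f x ≤ 1 := fun x => by
    exact_mod_cast le_one_of_friedman _ hF0 hFsq hFt hN x
  have hcount := card_neighbors_eq_of_sum_single_eq f hsimple (2 * (t + 1) - n) fun v => by
    exact_mod_cast sum_single_eq_of_friedman _ hF0 hFsq hFt hN v
  refine ⟨hsimple, fun x y hx hy hxy => ?_, fun v hv => ?_, fun v hv => ?_⟩
  · have h := (hcount x).1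
    simp only [hx, Nat.cast_one, sub_self, mul_zero, Nat.cast_eq_zero, card_eq_zero,
      filter_eq_empty_iff] at h
    exact h (mem_univ y) ⟨hy, hxy⟩
  · obtain ⟨h1, h0⟩ := hcount v
    simp only [hv, Nat.cast_one, sub_self, mul_zero, Nat.cast_eq_zero, sub_zero] at h1 h0
    exact ⟨h1, by exact_mod_cast h0⟩
  · simp only [hcount v, hv]
    constructor <;> ring
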